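/- Let q be a prime power with q ≡ 1 (mod 4), d = (q-1)/4, g a generator of F_q^*, and 0 ≤ i ≤ d-1. With α = g^(4i+2), define a₀ = (α+1)²/(4α), a₁ = (α²-1)/(4αg^d), a₂ = 1 - a₀, a₃ = -a₁. Then f(x) = a₃x^(3d+1) + a₂x^(2d+1) + a₁x^(d+1) + a₀x satisfies f(f(x)) = x for all x ∈ F_q and has exactly (q+1)/2 fixed points. -/

import Mathlib

/-!
For `x ≠ 0` the power `x ^ d` is a fourth root of unity, so it is one of `1, -1, s, -s`, where
`s = g ^ d` satisfies `s ^ 2 = -1`. Now `f x = x * P (x ^ d)` for the cubic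
`P y = a₃ y³ + a₂ y² + a₁ y + a₀`, and the coefficients are exactly those for which
`P 1 = P (-1) = 1`, `P s = α` and `P (-s) = α⁻¹`. So `f` fixes `0` and the squares, and maps `x`
with `x ^ d = s` to `α x`; since `α ^ d = -1`, `(α x) ^ d = -s` and `f (α x) = α⁻¹ α x = x`, and
symmetrically. The fixed points are `0` and the `2d` nonzero squares.
-/

open Polynomial

section

variable {F : Type*} [Field F]

lemma eq_one_or_eq_neg_one_or_eq_or_eq_neg_of_pow_four_eq_one {s y : F} (hs : s ^ 2 = -1)
    (hy : y ^ 4 = 1) : y = 1 ∨ y = -1 ∨ y = s ∨ y = -s := by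
  have : (y - 1) * (y + 1) * (y - s) * (y + s) = 0 := by
    linear_combination hy + (1 - y ^ 2) * hs
  simp only [mul_eq_zero, sub_eq_zero, add_eq_zero_iff_eq_neg] at this
  tauto

lemma cubic_eval_sqrt_neg_one {a₀ a₁ α s : F} (h2 : (2 : F) ≠ 0) (hα : α ≠ 0) (hs : s ^ 2 = -1)
    (ha₀ : a₀ = (α + 1) ^ 2 / (4 * α)) (ha₁ : a₁ = (α ^ 2 - 1) / (4 * α * s)) :
    -a₁ * s ^ 3 + (1 - a₀) * s ^ 2 + a₁ * s + a₀ = α ∧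
      -a₁ * (-s) ^ 3 + (1 - a₀) * (-s) ^ 2 + a₁ * (-s) + a₀ = α⁻¹ := by
  have hs0 : s ≠ 0 := by rintro rfl; norm_num at hs
  have h4 : (4 : F) ≠ 0 := by simpa [show (4 : F) = 2 * 2 by norm_num] using h2
  subst ha₀ ha₁
  constructor
  · field_simp
    linear_combination (2 * α - 2 * α ^ 2) * hs
  · field_simp
    linear_combination (2 * α - 2) * hs

section QuarticCharacter

variable {d : ℕ} {s α : F} {P : F → F}

lemma pow_eq_one_or_eq_neg_one_or_eq_or_eq_neg (hs : s ^ 2 = -1)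
    (hpow : ∀ x : F, x ≠ 0 → x ^ (4 * d) = 1) {x : F} (hx : x ≠ 0) :
    x ^ d = 1 ∨ x ^ d = -1 ∨ x ^ d = s ∨ x ^ d = -s :=
  eq_one_or_eq_neg_one_or_eq_or_eq_neg_of_pow_four_eq_one hs <| by
    rw [← pow_mul, mul_comm, hpow x hx]

variable (hs : s ^ 2 = -1) (hpow : ∀ x : F, x ≠ 0 → x ^ (4 * d) = 1) (hαd : α ^ d = -1)
  (hP_one : P 1 = 1) (hP_neg_one : P (-1) = 1) (hP_s : P s = α) (hP_neg_s : P (-s) = α⁻¹)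
include hs hpow hαd hP_one hP_neg_one hP_s hP_neg_s

theorem involutive_mul_eval_pow (hα : α ≠ 0) : Function.Involutive fun x ↦ x * P (x ^ d) := by
  intro x
  dsimp only
  rcases eq_or_ne x 0 with rfl | hx
  · simp
  rcases pow_eq_one_or_eq_neg_one_or_eq_or_eq_neg hs hpow hx with h | h | h | h
  · simp only [h, hP_one, mul_one]
  · simp only [h, hP_neg_one, mul_one]
  · have : (x * α) ^ d = -s := by rw [mul_pow, h, hαd, mul_neg_one]
    simp only [h, hP_s, this, hP_neg_s, mul_inv_cancel_right₀ hα]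
  · have : (x * α⁻¹) ^ d = s := by rw [mul_pow, h, inv_pow, hαd]; simp
    simp only [h, hP_neg_s, this, hP_s, inv_mul_cancel_right₀ hα]

theorem mul_eval_pow_eq_self_iff (h2 : (2 : F) ≠ 0) {x : F} :
    x * P (x ^ d) = x ↔ x = 0 ∨ x ^ (2 * d) = 1 := by
  have hne : (-1 : F) ≠ 1 := fun h ↦ h2 (by linear_combination -h)
  have hα : α ≠ 1 := by rintro rfl; exact hne (by rw [← hαd, one_pow])
  rcases eq_or_ne x 0 with rfl | hx
  · simp
  have hsq : x ^ (2 * d) = (x ^ d) ^ 2 := by rw [← pow_mul, mul_comm]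
  rcases pow_eq_one_or_eq_neg_one_or_eq_or_eq_neg hs hpow hx with h | h | h | h
  · simp [h, hP_one, hsq]
  · simp [h, hP_neg_one, hsq]
  · simp [h, hP_s, hsq, hx, hα, hs, hne]
  · simp [h, hP_neg_s, hsq, hx, hα, hs, hne]

theorem ncard_setOf_mul_eval_pow_eq_self (h2 : (2 : F) ≠ 0) {ζ : F}
    (hζ : IsPrimitiveRoot ζ (2 * d)) : {x : F | x * P (x ^ d) = x}.ncard = 2 * d + 1 := by
  classical
  have hd : 0 < 2 * d := by
    refine Nat.pos_of_ne_zero fun h ↦ h2 ?_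
    have hα₀ : α ^ d = 1 := by simp [show d = 0 by omega]
    linear_combination hαd - hα₀
  have hfix : {x : F | x * P (x ^ d) = x} = ↑(insert 0 (nthRootsFinset (2 * d) (1 : F))) := by
    ext x
    simp [mul_eval_pow_eq_self_iff hs hpow hαd hP_one hP_neg_one hP_s hP_neg_s h2,
      mem_nthRootsFinset hd]
  rw [hfix, Set.ncard_coe_finset, Finset.card_insert_of_notMem, hζ.card_nthRootsFinset]
  simp [mem_nthRootsFinset hd, hd.ne']

end QuarticCharacter

lemma FiniteField.isPrimitiveRoot_of_forall_mem_zpowers [Fintype F] {g : Fˣ}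
    (hg : ∀ x : Fˣ, x ∈ Subgroup.zpowers g) : IsPrimitiveRoot (g : F) (Fintype.card F - 1) := by
  classical
  rw [IsPrimitiveRoot.coe_units_iff, ← Fintype.card_units, ← Nat.card_eq_fintype_card,
    ← orderOf_eq_card_of_forall_mem_zpowers hg]
  exact IsPrimitiveRoot.orderOf g

end

theorem stmt7_general {F : Type*} [Field F] [Fintype F] (q : ℕ)
    (hq : Fintype.card F = q) (hq4 : q % 4 = 1)
    (d : ℕ) (hd : d = (q - 1) / 4)
    (g : Fˣ) (hg : ∀ x : Fˣ, x ∈ Subgroup.zpowers g)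
    (i : ℕ)
    (α a0 a1 a2 a3 : F) (hα : α = (g : F) ^ (4 * i + 2))
    (ha0 : a0 = (α + 1) ^ 2 / (4 * α))
    (ha1 : a1 = (α ^ 2 - 1) / (4 * α * (g : F) ^ d))
    (ha2 : a2 = 1 - a0)
    (ha3 : a3 = -a1)
    (f : F → F)
    (hf : ∀ x, f x = a3 * x ^ (3 * d + 1) + a2 * x ^ (2 * d + 1) +
      a1 * x ^ (d + 1) + a0 * x) :
    (∀ x, f (f x) = x) ∧ {x : F | f x = x}.ncard = (q + 1) / 2 := by
  have hq_gt : 1 < q := hq ▸ Fintype.one_lt_card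
  have hq1 : q - 1 = 4 * d := by omega
  have hg_prim : IsPrimitiveRoot (g : F) (4 * d) :=
    hq1 ▸ hq ▸ FiniteField.isPrimitiveRoot_of_forall_mem_zpowers hg
  have hs : ((g : F) ^ d) ^ 2 = -1 := by
    rw [← pow_mul]
    exact (hg_prim.pow (by omega) (by ring : 4 * d = d * 2 * 2)).eq_neg_one_of_two_right
  have h2 : (2 : F) ≠ 0 :=
    Ring.two_ne_zero (by rw [Ne, FiniteField.even_card_iff_char_two, hq]; omega)
  have hα0 : α ≠ 0 := hα ▸ pow_ne_zero _ g.ne_zero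
  have hαd : α ^ d = -1 := by
    rw [hα, ← pow_mul, show (4 * i + 2) * d = d * 2 * (2 * i + 1) by ring, pow_mul, pow_mul, hs,
      Odd.neg_one_pow ⟨i, by ring⟩]
  have hpow : ∀ x : F, x ≠ 0 → x ^ (4 * d) = 1 := fun x hx ↦ by
    rw [← hq1, ← hq]; exact FiniteField.pow_card_sub_one_eq_one x hx
  subst ha2 ha3
  set P : F → F := fun y ↦ -a1 * y ^ 3 + (1 - a0) * y ^ 2 + a1 * y + a0
  have hP_one : P 1 = 1 := by ring
  have hP_neg_one : P (-1) = 1 := by ring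
  obtain ⟨hP_s, hP_neg_s⟩ : P ((g : F) ^ d) = α ∧ P (-(g : F) ^ d) = α⁻¹ :=
    cubic_eval_sqrt_neg_one h2 hα0 hs ha0 ha1
  obtain rfl : f = fun x ↦ x * P (x ^ d) := by
    funext x; rw [hf]; ring
  refine ⟨involutive_mul_eval_pow hs hpow hαd hP_one hP_neg_one hP_s hP_neg_s hα0, ?_⟩
  rw [ncard_setOf_mul_eval_pow_eq_self hs hpow hαd hP_one hP_neg_one hP_s hP_neg_s h2
    (hg_prim.pow (by omega) (by ring : 4 * d = 2 * (2 * d)))]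
  omega

theorem stmt7 {F : Type*} [Field F] [Fintype F] (q : ℕ)
    (hq : Fintype.card F = q) (hq4 : q % 4 = 1)
    (d : ℕ) (hd : d = (q - 1) / 4)
    (g : Fˣ) (hg : ∀ x : Fˣ, x ∈ Subgroup.zpowers g)
    (i : ℕ) (hi : i ≤ d - 1)
    (α a0 a1 a2 a3 : F) (hα : α = (g : F) ^ (4 * i + 2))
    (ha0 : a0 = (α + 1) ^ 2 / (4 * α))
    (ha1 : a1 = (α ^ 2 - 1) / (4 * α * (g : F) ^ d))
    (ha2 : a2 = 1 - a0)
    (ha3 : a3 = -a1)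
    (f : F → F)
    (hf : ∀ x, f x = a3 * x ^ (3 * d + 1) + a2 * x ^ (2 * d + 1) +
      a1 * x ^ (d + 1) + a0 * x) :
    (∀ x, f (f x) = x) ∧ {x : F | f x = x}.ncard = (q + 1) / 2 :=
  stmt7_general q hq hq4 d hd g hg i α a0 a1 a2 a3 hα ha0 ha1 ha2 ha3 f hf
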